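/- For n ≥ 2 put p_n = n/(n−1) and let E = (⊕_{n=2}^∞ ℓ_{p_n}^n)_{c0}, equipped with its natural normalized 1-unconditional basis (the concatenation of the unit vector bases of the ℓ_{p_n}^n), and let X = E(c0) be the E-direct sum of countably many copies of c0. Then for every natural number n one has ι_{1/2}^n B_{X*} ≠ ∅; consequently Sz(X, 1/2) > ω and hence Sz(X) > ω. -/

import Mathlib

open Filter Topology Set
open scoped ENNReal NNReal

noncomputable section

/-- The `ε`-Szlenk derivation of a subset of the dual space, w.r.t. the weak* topology. -/
def szlenkDeriv {X : Type*} [NormedAddCommGroup X] [NormedSpace ℝ X] (ε : ℝ)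
    (K : Set (StrongDual ℝ X)) : Set (StrongDual ℝ X) :=
  {f | f ∈ K ∧ ∀ U : Set (WeakDual ℝ X), IsOpen U →
    StrongDual.toWeakDual f ∈ U →
    ε < Metric.diam {g | g ∈ K ∧ StrongDual.toWeakDual g ∈ U}}

/-- Iterated Szlenk derivations `ι_{ε₁}⋯ι_{εₙ} K` for a list `[ε₁, …, εₙ]`. -/
def szlenkDerivList {X : Type*} [NormedAddCommGroup X] [NormedSpace ℝ X] (l : List ℝ)
    (K : Set (StrongDual ℝ X)) : Set (StrongDual ℝ X) :=
  l.foldr szlenkDeriv K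

/-- The closed unit ball of the dual space. -/
def dualUnitBall (X : Type*) [NormedAddCommGroup X] [NormedSpace ℝ X] :
    Set (StrongDual ℝ X) :=
  Metric.closedBall 0 1

/-- `X` has summable Szlenk index with constant `M`. -/
def HasSummableSzlenkWith (X : Type*) [NormedAddCommGroup X] [NormedSpace ℝ X] (M : ℝ) : Prop :=
  ∀ l : List ℝ, (∀ ε ∈ l, 0 < ε) → (szlenkDerivList l (dualUnitBall X)).Nonempty → l.sum ≤ M

/-- `X` has summable Szlenk index. -/
def HasSummableSzlenk (X : Type*) [NormedAddCommGroup X] [NormedSpace ℝ X] : Prop :=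
  ∃ M > 0, HasSummableSzlenkWith X M

/-- When some finite iterate of the Szlenk derivation kills the dual ball, the ε-Szlenk index
`Sz(X, ε)` is the least `n : ℕ` with `ι_ε^n B_{X*} = ∅`. -/
def szlenkIdx (X : Type*) [NormedAddCommGroup X] [NormedSpace ℝ X] (ε : ℝ) : ℕ :=
  sInf {n : ℕ | (szlenkDeriv ε)^[n] (dualUnitBall X) = ∅}

/-- `Sz(X) ≤ ω`: the ε-Szlenk index is finite for every ε > 0. -/
def SzlenkLeOmega (X : Type*) [NormedAddCommGroup X] [NormedSpace ℝ X] : Prop :=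
  ∀ ε : ℝ, 0 < ε → ∃ n : ℕ, (szlenkDeriv ε)^[n] (dualUnitBall X) = ∅

/-- `Sz(X) = ω`: finite ε-Szlenk indices, unbounded as ε → 0. -/
def SzlenkEqOmega (X : Type*) [NormedAddCommGroup X] [NormedSpace ℝ X] : Prop :=
  SzlenkLeOmega X ∧ ∀ N : ℕ, ∃ ε : ℝ, 0 < ε ∧ ((szlenkDeriv ε)^[N] (dualUnitBall X)).Nonempty

/-- `X` has Szlenk power type `v`: `log Sz(X,ε)/|log ε| → v` as `ε → 0⁺`. -/
def HasSzlenkPowerType (X : Type*) [NormedAddCommGroup X] [NormedSpace ℝ X] (v : ℝ) : Prop :=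
  Tendsto (fun ε : ℝ => Real.log (szlenkIdx X ε) / |Real.log ε|) (𝓝[>] (0:ℝ)) (𝓝 v)

/-- `(Σᵢ |a i|^p)^{1/p}`, the maximum of the `|a i|` when `p = ∞`. -/
def pNorm (p : ℝ≥0∞) {ι : Type*} [Fintype ι] (a : ι → ℝ) : ℝ :=
  if p = ∞ then ((Finset.univ.sup fun i => ‖a i‖₊ : ℝ≥0) : ℝ)
  else (∑ i, |a i| ^ p.toReal) ^ (1 / p.toReal)

/-- A normed space `Z` with coordinate functionals `coord` is `C`-asymptotic `ℓ_p`: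
every block sequence `x₁, …, xₙ` of finitely supported vectors with successive supports
contained in `[n, ∞)` (1-based basis indexing; index `m : ℕ` is the `(m+1)`-st basis vector)
satisfies `C⁻¹ (Σ‖xⱼ‖^p)^{1/p} ≤ ‖Σ xⱼ‖ ≤ C (Σ‖xⱼ‖^p)^{1/p}`. -/
def IsAsymptoticLp (p : ℝ≥0∞) (C : ℝ) {Z : Type*} [NormedAddCommGroup Z]
    (coord : ℕ → Z → ℝ) : Prop :=
  ∀ (n : ℕ) (x : Fin n → Z),
    (∀ j, {m | coord m (x j) ≠ 0}.Finite) →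
    (∀ j m, coord m (x j) ≠ 0 → n ≤ m + 1) →
    (∀ (j k : Fin n), j < k → ∀ m m', coord m (x j) ≠ 0 → coord m' (x k) ≠ 0 → m < m') →
    C⁻¹ * pNorm p (fun j => ‖x j‖) ≤ ‖∑ j, x j‖ ∧
      ‖∑ j, x j‖ ≤ C * pNorm p (fun j => ‖x j‖)

/-- `(e, e')` is a 1-unconditional Schauder basis of `E` with biorthogonal functionals `e'`. -/
structure IsBasis1Unconditional {E : Type*} [NormedAddCommGroup E] [NormedSpace ℝ E]
    (e : ℕ → E) (e' : ℕ → StrongDual ℝ E) : Prop where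
  biorth : ∀ m n, e' m (e n) = if m = n then 1 else 0
  expansion : ∀ x : E, HasSum (fun n => e' n x • e n) x
  unconditional : ∀ (x : E) (σ : ℕ → ℝ), (∀ n, σ n = 1 ∨ σ n = -1) →
    ∃ y : E, HasSum (fun n => (σ n * e' n x) • e n) y ∧ ‖y‖ = ‖x‖

/-- The basis `e` of `E` is shrinking: the norm of the restriction of any functional to the
closed span of the tail of the basis tends to `0`. -/
def ShrinkingBasis {E : Type*} [NormedAddCommGroup E] [NormedSpace ℝ E] (e : ℕ → E) : Prop :=
  ∀ f : StrongDual ℝ E,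
    Tendsto (fun k =>
      ‖f.comp ((Submodule.span ℝ (e '' Set.Ici k)).topologicalClosure).subtypeL‖)
      atTop (𝓝 0)

/-- `T` realizes `Y` as the `E`-direct sum `(⊕ₙ Xₙ)_E` with respect to the basis `e`. -/
structure IsDirectSumE {E : Type*} [NormedAddCommGroup E] [NormedSpace ℝ E] (e : ℕ → E)
    (X : ℕ → Type*) [∀ n, NormedAddCommGroup (X n)] [∀ n, NormedSpace ℝ (X n)]
    {Y : Type*} [NormedAddCommGroup Y] [NormedSpace ℝ Y]
    (T : Y →ₗ[ℝ] ∀ n, X n) : Prop where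
  range_eq : Set.range T = {x | Summable fun n => ‖x n‖ • e n}
  norm_eq : ∀ y, ‖y‖ = ‖∑' n, ‖T y n‖ • e n‖

/-- `T` realizes `Y` as the c₀-sum `(⊕ₙ Xₙ)_{c₀}`. -/
structure IsC0Sum (X : ℕ → Type*) [∀ n, NormedAddCommGroup (X n)] [∀ n, NormedSpace ℝ (X n)]
    {Y : Type*} [NormedAddCommGroup Y] [NormedSpace ℝ Y] (T : Y →ₗ[ℝ] ∀ n, X n) : Prop where
  range_eq : Set.range T = {x | Tendsto (fun n => ‖x n‖) atTop (𝓝 0)}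
  norm_eq : ∀ y, ‖y‖ = ⨆ n, ‖T y n‖

/-- `T` realizes `Y` as the `ℓ_p`-sum `(⊕ₙ Xₙ)_{ℓ_p}`. -/
structure IsLpSum (p : ℝ) (X : ℕ → Type*) [∀ n, NormedAddCommGroup (X n)]
    [∀ n, NormedSpace ℝ (X n)] {Y : Type*} [NormedAddCommGroup Y] [NormedSpace ℝ Y]
    (T : Y →ₗ[ℝ] ∀ n, X n) : Prop where
  range_eq : Set.range T = {x | Summable fun n => ‖x n‖ ^ p}
  norm_eq : ∀ y, ‖y‖ = (∑' n, ‖T y n‖ ^ p) ^ (1/p)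

/-- `ν` is a norm on `X`. -/
structure IsNormOn {X : Type*} [NormedAddCommGroup X] [NormedSpace ℝ X] (ν : X → ℝ) : Prop where
  add_le : ∀ x y, ν (x + y) ≤ ν x + ν y
  smul_eq : ∀ (a : ℝ) (x : X), ν (a • x) = |a| * ν x
  eq_zero_iff : ∀ x : X, ν x = 0 ↔ x = 0

/-- The dual norm on `X*` corresponding to the (equivalent) norm `ν` on `X`. -/
def dualNormOf {X : Type*} [NormedAddCommGroup X] [NormedSpace ℝ X]
    (ν : X → ℝ) (f : StrongDual ℝ X) : ℝ :=
  sSup {r | ∃ x : X, ν x ≤ 1 ∧ r = |f x|}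

/-- `sup_n C_q(X_n) < ∞`: a common constant `c` with `Sz(Xₙ, ε) ≤ c ε^{-q}`. -/
def PowerTypeBddWith (X : ℕ → Type*) [∀ n, NormedAddCommGroup (X n)]
    [∀ n, NormedSpace ℝ (X n)] (q : ℝ) : Prop :=
  ∃ c : ℝ, ∀ n, ∀ ε ∈ Set.Ioo (0:ℝ) 1, (szlenkIdx (X n) ε : ℝ) ≤ c * ε ^ (-q)

/-- The fast growing hierarchy: `g 0 n = n + 1`, `g (k+1) n = (g k)^[n] n`. -/
def fastGrowing : ℕ → ℕ → ℕ
  | 0, n => n + 1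
  | k+1, n => (fastGrowing k)^[n] n

end

/-!
Fix `n` and put `N = n + 2`. On the `n`-th block of `E`, which is `ℓ_p^N` with `p = N/(N-1)`, the
dual exponent is `N`, so by Hölder the functionals `y ↦ N^{-1/N} ∑_{m ∈ F} (y_m)(k_m)` (with `F`
inside the block and `y_m ∈ c₀` the `m`-th component of `y`) lie in `B_{Y*}`. Adding a new index
`m₀` to `F` and letting `k_{m₀} → ∞` perturbs such a functional by a weak*-null sequence of norm
`N^{-1/N} > 1/2` (as `N < 2^N`). These functionals therefore form a tree of depth `N`, which
survives `N` rounds of the `1/2`-Szlenk derivation.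
-/

open scoped ZeroAtInfty


section Szlenk

variable {X : Type*} [NormedAddCommGroup X] [NormedSpace ℝ X]

theorem szlenkDeriv_iterate_subset (ε : ℝ) (K : Set (StrongDual ℝ X)) (j : ℕ) :
    (szlenkDeriv ε)^[j] K ⊆ K := by
  induction j with
  | zero => exact subset_rfl
  | succ j ih =>
    rw [Function.iterate_succ_apply']
    exact fun f hf => ih hf.1

theorem mem_szlenkDeriv_of_tendsto {ε c : ℝ} (hεc : ε < c) {K : Set (StrongDual ℝ X)}
    (hK : Bornology.IsBounded K) {f : StrongDual ℝ X} (hf : f ∈ K) {g : ℕ → StrongDual ℝ X}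
    (hg : ∀ m, g m ∈ K) (hdist : ∀ m, c ≤ dist (g m) f)
    (htend : Tendsto (fun m => StrongDual.toWeakDual (g m)) atTop
      (𝓝 (StrongDual.toWeakDual f))) :
    f ∈ szlenkDeriv ε K := by
  refine ⟨hf, fun U hU hfU => ?_⟩
  obtain ⟨m, hm⟩ := (htend.eventually (hU.mem_nhds hfU)).exists
  calc ε < c := hεc
    _ ≤ dist (g m) f := hdist m
    _ ≤ _ := Metric.dist_le_diam_of_mem (s := {g | g ∈ K ∧ StrongDual.toWeakDual g ∈ U})
      (hK.subset fun _ h => h.1) ⟨hg m, hm⟩ ⟨hf, hfU⟩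

theorem subset_szlenkDeriv_iterate {ε c : ℝ} (hεc : ε < c) {K : Set (StrongDual ℝ X)}
    (hK : Bornology.IsBounded K) {A : ℕ → Set (StrongDual ℝ X)} (hA : Antitone A)
    (hA0 : A 0 ⊆ K)
    (hstep : ∀ j, ∀ f ∈ A (j + 1), ∃ g : ℕ → StrongDual ℝ X, (∀ m, g m ∈ A j) ∧
      (∀ m, c ≤ dist (g m) f) ∧
      Tendsto (fun m => StrongDual.toWeakDual (g m)) atTop (𝓝 (StrongDual.toWeakDual f)))
    (j : ℕ) : A j ⊆ (szlenkDeriv ε)^[j] K := by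
  induction j with
  | zero => exact hA0
  | succ j ih =>
    intro f hf
    obtain ⟨g, hgA, hdist, htend⟩ := hstep j f hf
    rw [Function.iterate_succ_apply']
    exact mem_szlenkDeriv_of_tendsto hεc (hK.subset (szlenkDeriv_iterate_subset ε K j))
      (ih (hA (Nat.le_succ j) hf)) (fun m => ih (hgA m)) hdist htend

theorem sum_insert_update {ι α M : Type*} [DecidableEq ι] [AddCommMonoid M] (u : ι → α → M)
    {F : Finset ι} {i₀ : ι} (hi₀ : i₀ ∉ F) (k : ι → α) (a : α) :
    ∑ i ∈ insert i₀ F, u i (Function.update k i₀ a i) = u i₀ a + ∑ i ∈ F, u i (k i) := by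
  rw [Finset.sum_insert hi₀, Function.update_self]
  congr 1
  exact Finset.sum_congr rfl fun i hi => by rw [Function.update_of_ne (ne_of_mem_of_not_mem hi hi₀)]

theorem tendsto_toWeakDual_add_smul (f : StrongDual ℝ X) {u : ℕ → StrongDual ℝ X} (c : ℝ)
    (hu : ∀ x, Tendsto (fun k => u k x) atTop (𝓝 0)) :
    Tendsto (fun k => StrongDual.toWeakDual (f + c • u k)) atTop
      (𝓝 (StrongDual.toWeakDual f)) := by
  rw [tendsto_iff_forall_eval_tendsto_topDualPairing]
  intro x
  have h := (tendsto_const_nhds (x := f x)).add ((hu x).const_mul c)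
  rwa [mul_zero, add_zero] at h

/-- The nodes of the tree are the functionals `C⁻¹ • ∑ m ∈ F, u m (k m)` with `F ⊆ B`;
extending `F` by one index `m₀` and letting `k m₀ → ∞` gives a weak*-null perturbation of norm
at least `C⁻¹`. -/
theorem szlenkDeriv_iterate_dualUnitBall_nonempty {u : ℕ → ℕ → StrongDual ℝ X} {B : Finset ℕ}
    {C ε : ℝ} (hC : 0 < C) (hε : ε < C⁻¹)
    (hnull : ∀ m ∈ B, ∀ x, Tendsto (fun k => u m k x) atTop (𝓝 0))
    (hnorm : ∀ m ∈ B, ∀ k, 1 ≤ ‖u m k‖)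
    (hbdd : ∀ F ⊆ B, ∀ k : ℕ → ℕ, ‖∑ m ∈ F, u m (k m)‖ ≤ C) {j : ℕ} (hj : j ≤ B.card) :
    ((szlenkDeriv ε)^[j] (dualUnitBall X)).Nonempty := by
  classical
  let φ : Finset ℕ → (ℕ → ℕ) → StrongDual ℝ X := fun F k => C⁻¹ • ∑ m ∈ F, u m (k m)
  have hφ_insert {F : Finset ℕ} {m₀ : ℕ} (hm₀ : m₀ ∉ F) (k : ℕ → ℕ) (m : ℕ) :
      φ (insert m₀ F) (Function.update k m₀ m) = φ F k + C⁻¹ • u m₀ m := by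
    simp only [φ, sum_insert_update u hm₀, smul_add, add_comm]
  let A : ℕ → Set (StrongDual ℝ X) := fun j =>
    {f | ∃ F ⊆ B, F.card + j ≤ B.card ∧ ∃ k, f = φ F k}
  have hA : Antitone A := fun i j hij f ⟨F, hF, hcard, k, hf⟩ => ⟨F, hF, by omega, k, hf⟩
  have hA0 : A 0 ⊆ dualUnitBall X := by
    rintro _ ⟨F, hF, -, k, rfl⟩
    rw [dualUnitBall, mem_closedBall_zero_iff, norm_smul, Real.norm_of_nonneg (inv_nonneg.2 hC.le)]
    calc C⁻¹ * ‖∑ m ∈ F, u m (k m)‖ ≤ C⁻¹ * C := by gcongr; exact hbdd F hF k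
      _ = 1 := inv_mul_cancel₀ hC.ne'
  have hstep : ∀ j, ∀ f ∈ A (j + 1), ∃ g : ℕ → StrongDual ℝ X, (∀ m, g m ∈ A j) ∧
      (∀ m, C⁻¹ ≤ dist (g m) f) ∧
      Tendsto (fun m => StrongDual.toWeakDual (g m)) atTop (𝓝 (StrongDual.toWeakDual f)) := by
    rintro j _ ⟨F, hF, hcard, k, rfl⟩
    obtain ⟨m₀, hm₀B, hm₀F⟩ :=
      Finset.exists_mem_notMem_of_card_lt_card (show F.card < B.card by omega)
    refine ⟨fun m => φ (insert m₀ F) (Function.update k m₀ m), fun m => ?_, fun m => ?_, ?_⟩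
    · refine ⟨insert m₀ F, Finset.insert_subset hm₀B hF, ?_, _, rfl⟩
      rw [Finset.card_insert_of_notMem hm₀F]
      omega
    · dsimp only
      rw [dist_eq_norm, hφ_insert hm₀F, add_sub_cancel_left, norm_smul,
        Real.norm_of_nonneg (inv_nonneg.2 hC.le)]
      exact le_mul_of_one_le_right (inv_nonneg.2 hC.le) (hnorm m₀ hm₀B m)
    · simpa only [hφ_insert hm₀F] using tendsto_toWeakDual_add_smul _ C⁻¹ (hnull m₀ hm₀B)
  refine ⟨0, subset_szlenkDeriv_iterate hε Metric.isBounded_closedBall hA hA0 hstep j ?_⟩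
  exact ⟨∅, Finset.empty_subset B, by simpa using hj, 0, by simp [φ]⟩

end Szlenk

namespace IsBasis1Unconditional

variable {E : Type*} [NormedAddCommGroup E] [NormedSpace ℝ E] {e : ℕ → E}
  {e' : ℕ → StrongDual ℝ E}

theorem coord_tsum (hb : IsBasis1Unconditional e e') {a : ℕ → ℝ}
    (ha : Summable fun n => a n • e n) (m : ℕ) : e' m (∑' n, a n • e n) = a m := by
  rw [(e' m).map_tsum ha, tsum_eq_single m fun n hn => by simp [hb.biorth, hn.symm]]
  simp [hb.biorth]

/-- Average `x` with its sign change off `F`. -/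
theorem norm_sum_coord_smul_le (hb : IsBasis1Unconditional e e') (x : E) (F : Finset ℕ) :
    ‖∑ m ∈ F, e' m x • e m‖ ≤ ‖x‖ := by
  classical
  let σ : ℕ → ℝ := fun m => if m ∈ F then 1 else -1
  obtain ⟨y, hy, hyx⟩ := hb.unconditional x σ fun m => by by_cases h : m ∈ F <;> simp [σ, h]
  have hF : HasSum (fun m => (1 / 2 : ℝ) • (e' m x • e m + (σ m * e' m x) • e m))
      (∑ m ∈ F, e' m x • e m) := by
    have h : HasSum (fun m => if m ∈ F then e' m x • e m else 0)
        (∑ m ∈ F, if m ∈ F then e' m x • e m else 0) :=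
      hasSum_sum_of_ne_finset_zero fun m hm => if_neg hm
    convert h using 1
    · funext m
      by_cases h : m ∈ F
      · simp only [σ, if_pos h]; module
      · simp only [σ, if_neg h]; module
    · exact (Finset.sum_congr rfl fun m hm => if_pos hm).symm
  rw [((hb.expansion x).add hy).const_smul (1 / 2 : ℝ) |>.unique hF |>.symm, norm_smul]
  calc ‖(1 / 2 : ℝ)‖ * ‖x + y‖ ≤ 1 / 2 * (‖x‖ + ‖y‖) := by
        rw [Real.norm_of_nonneg (by norm_num)]; gcongr; exact norm_add_le x y
    _ = ‖x‖ := by rw [hyx]; ring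

theorem norm_sum_smul_le_norm_tsum (hb : IsBasis1Unconditional e e') {a : ℕ → ℝ}
    (ha : Summable fun n => a n • e n) (F : Finset ℕ) :
    ‖∑ m ∈ F, a m • e m‖ ≤ ‖∑' n, a n • e n‖ := by
  simpa only [hb.coord_tsum ha] using hb.norm_sum_coord_smul_le (∑' n, a n • e n) F

end IsBasis1Unconditional

namespace IsDirectSumE

variable {E : Type*} [NormedAddCommGroup E] [NormedSpace ℝ E] {e : ℕ → E}
  {e' : ℕ → StrongDual ℝ E} {X : ℕ → Type*} [∀ n, NormedAddCommGroup (X n)]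
  [∀ n, NormedSpace ℝ (X n)] {Y : Type*} [NormedAddCommGroup Y] [NormedSpace ℝ Y]
  {T : Y →ₗ[ℝ] ∀ n, X n}

theorem summable_norm_smul (hT : IsDirectSumE e X T) (y : Y) :
    Summable fun n => ‖T y n‖ • e n := by
  have h : T y ∈ Set.range T := Set.mem_range_self y
  rwa [hT.range_eq] at h

theorem norm_sum_norm_smul_le (hb : IsBasis1Unconditional e e') (hT : IsDirectSumE e X T) (y : Y)
    (F : Finset ℕ) : ‖∑ m ∈ F, ‖T y m‖ • e m‖ ≤ ‖y‖ :=
  hT.norm_eq y ▸ hb.norm_sum_smul_le_norm_tsum (hT.summable_norm_smul y) F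

theorem norm_apply_le (hb : IsBasis1Unconditional e e') (hnorm : ∀ n, ‖e n‖ = 1)
    (hT : IsDirectSumE e X T) (y : Y) (m : ℕ) : ‖T y m‖ ≤ ‖y‖ := by
  simpa [norm_smul, hnorm] using hT.norm_sum_norm_smul_le hb y {m}

theorem exists_apply_eq_single (hnorm : ∀ n, ‖e n‖ = 1) (hT : IsDirectSumE e X T) (m : ℕ)
    (x : X m) : ∃ y : Y, T y = Pi.single m x ∧ ‖y‖ = ‖x‖ := by
  have hzero : ∀ n ≠ m, ‖(Pi.single m x : ∀ n, X n) n‖ • e n = 0 := fun n hn => by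
    rw [Pi.single_eq_of_ne hn, norm_zero, zero_smul]
  have hsum := hasSum_single (f := fun n => ‖(Pi.single m x : ∀ n, X n) n‖ • e n) m hzero
  obtain ⟨y, hy⟩ : Pi.single m x ∈ Set.range T := by
    rw [hT.range_eq]
    exact hsum.summable
  refine ⟨y, hy, ?_⟩
  rw [hT.norm_eq, hy, hsum.tsum_eq, Pi.single_eq_same, norm_smul, hnorm, mul_one, norm_norm]

end IsDirectSumE

namespace ZeroAtInftyContinuousMap

theorem norm_apply_le {α β : Type*} [TopologicalSpace α] [NormedAddCommGroup β] (f : C₀(α, β))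
    (x : α) : ‖f x‖ ≤ ‖f‖ := by
  rw [← norm_toBCF_eq_norm]
  exact f.toBCF.norm_coe_le_norm x

theorem tendsto_atTop_zero {β : Type*} [TopologicalSpace β] [Zero β] (f : C₀(ℕ, β)) :
    Tendsto f atTop (𝓝 0) := by
  simpa [cocompact_eq_cofinite, Nat.cofinite_eq_atTop] using f.zero_at_infty'

theorem exists_norm_le_one_apply_eq_one (k : ℕ) : ∃ δ : C₀(ℕ, ℝ), ‖δ‖ ≤ 1 ∧ δ k = 1 := by
  classical
  let δ : C₀(ℕ, ℝ) :=
    { toFun := Pi.single k 1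
      continuous_toFun := continuous_of_discreteTopology
      zero_at_infty' := by
        rw [cocompact_eq_cofinite]
        refine tendsto_const_nhds.congr' ((eventually_cofinite_ne k).mono fun n hn => ?_)
        exact (Pi.single_eq_of_ne (M := fun _ => ℝ) hn 1).symm }
  refine ⟨δ, ?_, Pi.single_eq_same k 1⟩
  rw [← norm_toBCF_eq_norm, BoundedContinuousFunction.norm_le zero_le_one]
  intro n
  change ‖(Pi.single k 1 : ℕ → ℝ) n‖ ≤ 1
  by_cases h : n = k <;> simp [h]

end ZeroAtInftyContinuousMap

theorem sum_le_card_rpow_mul_Lp_of_nonneg {ι : Type*} (s : Finset ι) {p q : ℝ}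
    (hpq : p.HolderConjugate q) {b : ι → ℝ} (hb : ∀ i ∈ s, 0 ≤ b i) :
    ∑ i ∈ s, b i ≤ (s.card : ℝ) ^ (1 / q) * (∑ i ∈ s, b i ^ p) ^ (1 / p) := by
  have h := Real.inner_le_Lp_mul_Lq_of_nonneg s hpq hb fun _ _ => zero_le_one
  simp only [mul_one, Real.one_rpow, Finset.sum_const, nsmul_eq_mul] at h
  linarith

theorem natCast_rpow_inv_natCast_lt_two {N : ℕ} (hN : 0 < N) : (N : ℝ) ^ (N : ℝ)⁻¹ < 2 :=
  (Real.rpow_inv_lt_iff_of_pos (Nat.cast_nonneg N) zero_le_two (Nat.cast_pos.2 hN)).2 <| by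
    rw [Real.rpow_natCast]
    exact_mod_cast Nat.lt_two_pow_self

/-- The coordinates of the `j`-th block of `E`, normed as `ℓ_p^{j+2}` with `p = (j+2)/(j+1)`. -/
def lpBlock (j : ℕ) : Finset ℕ := Finset.Ico (j * (j + 3) / 2) (j * (j + 3) / 2 + j + 2)

theorem card_lpBlock (j : ℕ) : (lpBlock j).card = j + 2 := by
  simp only [lpBlock, Nat.card_Ico]
  omega

theorem lpBlock_end_le {i j : ℕ} (h : i < j) : i * (i + 3) / 2 + i + 2 ≤ j * (j + 3) / 2 := by
  have hle := Nat.div_le_div_right (c := 2)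
    (Nat.mul_le_mul (show i + 1 ≤ j by omega) (show i + 4 ≤ j + 3 by omega))
  rw [show (i + 1) * (i + 4) = i * (i + 3) + 2 * (i + 2) by ring,
    Nat.add_mul_div_left _ _ two_pos] at hle
  omega

theorem disjoint_lpBlock {i j : ℕ} (h : i ≠ j) : Disjoint (lpBlock i) (lpBlock j) := by
  rw [Finset.disjoint_left]
  intro m hi hj
  simp only [lpBlock, Finset.mem_Ico] at hi hj
  rcases h.lt_or_gt with h | h
  · have := lpBlock_end_le h
    omega
  · have := lpBlock_end_le h
    omega

section BlockNorm

variable {E : Type*} [NormedAddCommGroup E] [NormedSpace ℝ E] {e : ℕ → E}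

def HasBlockLpNorm (e : ℕ → E) : Prop :=
  ∀ a : ℕ →₀ ℝ, ‖a.sum (fun m c => c • e m)‖ =
    ⨆ j : ℕ, (∑ m ∈ lpBlock j, |a m| ^ (((j:ℝ) + 2) / ((j:ℝ) + 1))) ^ (((j:ℝ) + 1) / ((j:ℝ) + 2))

/-- In the norm of `E`, a vector supported on `lpBlock n` sees only the `n`-th term of the
supremum. -/
theorem rpow_sum_lpBlock_le_norm (hE : HasBlockLpNorm e) (n : ℕ) (b : ℕ → ℝ) :
    (∑ m ∈ lpBlock n, |b m| ^ (((n:ℝ) + 2) / ((n:ℝ) + 1))) ^ (((n:ℝ) + 1) / ((n:ℝ) + 2)) ≤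
      ‖∑ m ∈ lpBlock n, b m • e m‖ := by
  classical
  let a : ℕ →₀ ℝ := Finsupp.indicator (lpBlock n) fun m _ => b m
  let g : ℕ → ℝ := fun j =>
    (∑ m ∈ lpBlock j, |a m| ^ (((j:ℝ) + 2) / ((j:ℝ) + 1))) ^ (((j:ℝ) + 1) / ((j:ℝ) + 2))
  have ha_of_mem {m : ℕ} (hm : m ∈ lpBlock n) : a m = b m := by
    simp [a, Finsupp.indicator_apply, hm]
  have hg_of_ne {j : ℕ} (hj : j ≠ n) : g j = 0 := by
    have hzero : ∀ m ∈ lpBlock j, a m = 0 := fun m hm => by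
      simp [a, Finsupp.indicator_apply, Finset.disjoint_left.1 (disjoint_lpBlock hj) hm]
    have hsum : ∑ m ∈ lpBlock j, |a m| ^ (((j:ℝ) + 2) / ((j:ℝ) + 1)) = 0 :=
      Finset.sum_eq_zero fun m hm => by rw [hzero m hm, abs_zero, Real.zero_rpow (by positivity)]
    simp only [g, hsum]
    exact Real.zero_rpow (by positivity)
  have hbdd : BddAbove (Set.range g) := by
    refine ⟨max (g n) 0, ?_⟩
    rintro _ ⟨j, rfl⟩
    rcases eq_or_ne j n with rfl | hj
    · exact le_max_left _ _
    · exact (hg_of_ne hj).trans_le (le_max_right _ _)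
  have hasum : a.sum (fun m c => c • e m) = ∑ m ∈ lpBlock n, b m • e m := by
    rw [Finsupp.sum_of_support_subset a (Finsupp.support_indicator_subset _ _) _
      fun m _ => zero_smul ℝ (e m)]
    exact Finset.sum_congr rfl fun m hm => by rw [ha_of_mem hm]
  calc _ = g n := by
        simp only [g]
        congr 1
        exact Finset.sum_congr rfl fun m hm => by rw [ha_of_mem hm]
    _ ≤ ⨆ j, g j := le_ciSup hbdd n
    _ = _ := by rw [← hasum, hE a]

end BlockNorm

namespace IsDirectSumE

variable {E : Type*} [NormedAddCommGroup E] [NormedSpace ℝ E] {e : ℕ → E}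
  {e' : ℕ → StrongDual ℝ E} {Y : Type*} [NormedAddCommGroup Y] [NormedSpace ℝ Y]
  {T : Y →ₗ[ℝ] ∀ _ : ℕ, C₀(ℕ, ℝ)}

def coordEval (hb : IsBasis1Unconditional e e') (hnorm : ∀ n, ‖e n‖ = 1)
    (hT : IsDirectSumE e (fun _ => C₀(ℕ, ℝ)) T) (m k : ℕ) : StrongDual ℝ Y :=
  LinearMap.mkContinuous
    { toFun := fun y => T y m k
      map_add' := fun y z => by simp
      map_smul' := fun r y => by simp }
    1 fun y => by
      rw [one_mul]
      exact ((T y m).norm_apply_le k).trans (hT.norm_apply_le hb hnorm y m)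

variable (hb : IsBasis1Unconditional e e') (hnorm : ∀ n, ‖e n‖ = 1)
  (hT : IsDirectSumE e (fun _ => C₀(ℕ, ℝ)) T)

@[simp]
theorem coordEval_apply (m k : ℕ) (y : Y) : hT.coordEval hb hnorm m k y = T y m k := rfl

theorem tendsto_coordEval (m : ℕ) (y : Y) :
    Tendsto (fun k => hT.coordEval hb hnorm m k y) atTop (𝓝 0) :=
  (T y m).tendsto_atTop_zero

theorem one_le_norm_coordEval (m k : ℕ) : 1 ≤ ‖hT.coordEval hb hnorm m k‖ := by
  obtain ⟨δ, hδ, hδk⟩ := ZeroAtInftyContinuousMap.exists_norm_le_one_apply_eq_one k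
  obtain ⟨y, hy, hyδ⟩ := hT.exists_apply_eq_single hnorm m δ
  calc 1 = ‖hT.coordEval hb hnorm m k y‖ := by simp [hy, hδk]
    _ ≤ _ := ContinuousLinearMap.unit_le_opNorm _ y (hyδ.trans_le hδ)

/-- Hölder's inequality on `lpBlock n` against the dual exponent `n + 2`. -/
theorem norm_sum_coordEval_le (hE : HasBlockLpNorm e) {n : ℕ} {F : Finset ℕ}
    (hF : F ⊆ lpBlock n) (k : ℕ → ℕ) :
    ‖∑ m ∈ F, hT.coordEval hb hnorm m (k m)‖ ≤ ((n:ℝ) + 2) ^ ((n:ℝ) + 2)⁻¹ := by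
  set p : ℝ := ((n:ℝ) + 2) / ((n:ℝ) + 1) with hp
  have hpq : p.HolderConjugate ((n:ℝ) + 2) := by
    rw [Real.holderConjugate_iff, hp, lt_div_iff₀ (by positivity)]
    refine ⟨by linarith, ?_⟩
    field_simp
    ring
  refine ContinuousLinearMap.opNorm_le_bound _ (by positivity) fun y => ?_
  calc ‖(∑ m ∈ F, hT.coordEval hb hnorm m (k m)) y‖
      ≤ ∑ m ∈ F, ‖T y m‖ := by
        rw [sum_apply]
        refine (norm_sum_le _ _).trans (Finset.sum_le_sum fun m _ => ?_)
        exact (T y m).norm_apply_le (k m)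
    _ ≤ ∑ m ∈ lpBlock n, ‖T y m‖ :=
        Finset.sum_le_sum_of_subset_of_nonneg hF fun m _ _ => norm_nonneg _
    _ ≤ ((n:ℝ) + 2) ^ ((n:ℝ) + 2)⁻¹ * (∑ m ∈ lpBlock n, ‖T y m‖ ^ p) ^ (1 / p) := by
        simpa [card_lpBlock] using
          sum_le_card_rpow_mul_Lp_of_nonneg (lpBlock n) hpq fun m _ => norm_nonneg (T y m)
    _ ≤ ((n:ℝ) + 2) ^ ((n:ℝ) + 2)⁻¹ * ‖y‖ := by
        gcongr
        calc (∑ m ∈ lpBlock n, ‖T y m‖ ^ p) ^ (1 / p)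
            = (∑ m ∈ lpBlock n, |‖T y m‖| ^ p) ^ (((n:ℝ) + 1) / ((n:ℝ) + 2)) := by
              simp only [abs_norm, hp, one_div_div]
          _ ≤ ‖∑ m ∈ lpBlock n, ‖T y m‖ • e m‖ := rpow_sum_lpBlock_le_norm hE n _
          _ ≤ ‖y‖ := hT.norm_sum_norm_smul_le hb y _

end IsDirectSumE

theorem szlenk_of_c0Sum_lpnn_of_c0_general
    (E : Type*) [NormedAddCommGroup E] [NormedSpace ℝ E]
    (e : ℕ → E) (e' : ℕ → StrongDual ℝ E)
    (hb : IsBasis1Unconditional e e') (hnorm : ∀ n, ‖e n‖ = 1)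
    (hE : ∀ a : ℕ →₀ ℝ,
      ‖a.sum (fun m c => c • e m)‖ =
        ⨆ j : ℕ, (∑ m ∈ Finset.Ico (j * (j+3) / 2) (j * (j+3) / 2 + j + 2),
          |a m| ^ (((j:ℝ) + 2) / ((j:ℝ) + 1))) ^ (((j:ℝ) + 1) / ((j:ℝ) + 2)))
    (Y : Type*) [NormedAddCommGroup Y] [NormedSpace ℝ Y]
    (T : Y →ₗ[ℝ] ∀ _ : ℕ, ZeroAtInftyContinuousMap ℕ ℝ)
    (hT : IsDirectSumE e (fun _ => ZeroAtInftyContinuousMap ℕ ℝ) T) :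
    ∀ n : ℕ, ((szlenkDeriv (1/2))^[n] (dualUnitBall Y)).Nonempty := by
  intro n
  have hC : ((n:ℝ) + 2) ^ ((n:ℝ) + 2)⁻¹ < 2 := by
    exact_mod_cast natCast_rpow_inv_natCast_lt_two (N := n + 2) (by omega)
  refine szlenkDeriv_iterate_dualUnitBall_nonempty (B := lpBlock n) (by positivity)
    ?_ (fun m _ => hT.tendsto_coordEval hb hnorm m) (fun m _ => hT.one_le_norm_coordEval hb hnorm m)
    (fun F hF => hT.norm_sum_coordEval_le hb hnorm hE hF) (by simp [card_lpBlock])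
  rw [one_div]
  exact (inv_lt_inv₀ two_pos (by positivity)).2 hC

/-- For `n ≥ 2` put `pₙ = n/(n−1)` and let `E = (⊕ₙ ℓ_{pₙ}ⁿ)_{c₀}` with its
natural normalized 1-unconditional basis: the `j`-th block (`j = 0, 1, 2, …`, corresponding to
`n = j + 2`) has length `j+2`, occupies the coordinates `[j(j+3)/2, j(j+3)/2 + j + 2)`, and the
norm of a finitely supported vector is the supremum of the `ℓ_{p_{j+2}}` norms of its blocks.
Let `X = E(c₀)` be the `E`-direct sum of countably many copies of `c₀`. Then
`ι_{1/2}^n B_{X*} ≠ ∅` for every `n : ℕ` (consequently `Sz(X, 1/2) > ω`, so `Sz(X) > ω`). -/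
theorem szlenk_of_c0Sum_lpnn_of_c0
    (E : Type*) [NormedAddCommGroup E] [NormedSpace ℝ E] [CompleteSpace E]
    (e : ℕ → E) (e' : ℕ → StrongDual ℝ E)
    (hb : IsBasis1Unconditional e e') (hnorm : ∀ n, ‖e n‖ = 1)
    (hE : ∀ a : ℕ →₀ ℝ,
      ‖a.sum (fun m c => c • e m)‖ =
        ⨆ j : ℕ, (∑ m ∈ Finset.Ico (j * (j+3) / 2) (j * (j+3) / 2 + j + 2),
          |a m| ^ (((j:ℝ) + 2) / ((j:ℝ) + 1))) ^ (((j:ℝ) + 1) / ((j:ℝ) + 2)))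
    (Y : Type*) [NormedAddCommGroup Y] [NormedSpace ℝ Y] [CompleteSpace Y]
    (T : Y →ₗ[ℝ] ∀ _ : ℕ, ZeroAtInftyContinuousMap ℕ ℝ)
    (hT : IsDirectSumE e (fun _ => ZeroAtInftyContinuousMap ℕ ℝ) T) :
    ∀ n : ℕ, ((szlenkDeriv (1/2))^[n] (dualUnitBall Y)).Nonempty :=
  szlenk_of_c0Sum_lpnn_of_c0_general E e e' hb hnorm hE Y T hT
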